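/- A point x* ∈ X solving both weighted-constraint subproblems simultaneously is weakly Pareto optimal: if x* minimizes w₁ f₁ over {x ∈ X : w₂ f₂(x) ≤ w₁ f₁(x)} and also minimizes w₂ f₂ over {x ∈ X : w₁ f₁(x) ≤ w₂ f₂(x)}, with w₁, w₂ > 0, then there is no y ∈ X with f₁(y) < f₁(x*) and f₂(y) < f₂(x*). -/

import Mathlib

theorem both_subproblems_weak_pareto {α : Type*} (X : Set α) (f₁ f₂ : α → ℝ)
    (w₁ w₂ : ℝ) (hw₁ : 0 < w₁) (hw₂ : 0 < w₂) (x : α)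
    (hx₁ : x ∈ {z ∈ X | w₂ * f₂ z ≤ w₁ * f₁ z})
    (hx₂ : x ∈ {z ∈ X | w₁ * f₁ z ≤ w₂ * f₂ z})
    (hmin₁ : ∀ y ∈ {z ∈ X | w₂ * f₂ z ≤ w₁ * f₁ z}, w₁ * f₁ x ≤ w₁ * f₁ y)
    (hmin₂ : ∀ y ∈ {z ∈ X | w₁ * f₁ z ≤ w₂ * f₂ z}, w₂ * f₂ x ≤ w₂ * f₂ y) :
    ¬ ∃ y ∈ X, f₁ y < f₁ x ∧ f₂ y < f₂ x := by
  rintro ⟨y, hyX, h1, h2⟩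
  rcases le_total (w₂ * f₂ y) (w₁ * f₁ y) with h | h
  · have := hmin₁ y ⟨hyX, h⟩
    have := (mul_le_mul_iff_right₀ hw₁).mp this
    linarith
  · have := hmin₂ y ⟨hyX, h⟩
    have := (mul_le_mul_iff_right₀ hw₂).mp this
    linarith
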